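/- Let d ≥ 2, let q : {1,…,d}×{1,…,d} → ℂ take unimodular values with q(i,i) = 1 and q(i,j) = conj(q(j,i)), and let (X₁,…,X_d) be a q-commutative d-tuple of isometries on a complex Hilbert space H. Then there exist a complex Hilbert space K, an isometric linear embedding ι : H → K, and a q-commutative d-tuple of unitaries (Y₁,…,Y_d) on K such that Y_i ι = ι X_i for every i (so each Y_i extends X_i), and such that Y = Y₁Y₂⋯Y_d is the minimal unitary extension of X = X₁X₂⋯X_d, i.e., Y ι = ι X and K equals the closed linear span of ∪_{n≥0} Y^{*n} ι(H). -/

import Mathlib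

open ContinuousLinearMap

/-!
The minimal unitary extension of the isometry `U = X₁ ⋯ X_d` is the completion of the direct
limit of `H →U H →U H → ⋯`, in which `of n x` plays the role of `U⁻ⁿ x`. Moving `X_i` through
the product gives `X_i U = λ_i U X_i` with `λ_i = ∏_j q(i,j)`, a unimodular scalar, so
`of n x ↦ conj(λ_i)ⁿ • of n (X_i x)` is a well defined isometry of the direct limit. It is onto
because `U = b • X_i W` for some `b` and `W`, hence extends to a unitary `Y_i`, and these twisted
extensions inherit the `q`-commutation relations. The antisymmetry of `q` gives `∏_i λ_i = 1`,
so `Y₁ ⋯ Y_d` extends `U` and its adjoint sends `of n x` to `of (n + 1) x`; the vectors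
`(Y*)ⁿ x` thus exhaust the dense subspace of the direct limit.
-/

noncomputable section

theorem Fintype.prod_prod_eq_one_of_mul_swap {ι M : Type*} [Fintype ι] [CommMonoid M]
    (q : ι → ι → M) (hdiag : ∀ i, q i i = 1) (hswap : ∀ i j, q i j * q j i = 1) :
    ∏ i, ∏ j, q i j = 1 := by
  rw [← Fintype.prod_prod_type']
  refine Finset.prod_involution (fun p _ => p.swap) (fun p _ => hswap p.1 p.2) ?_
    (fun p _ => Finset.mem_univ _) (fun p _ => p.swap_swap)
  rintro ⟨i, j⟩ - hne hfixed
  obtain rfl : j = i := congrArg Prod.fst hfixed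
  exact hne (hdiag j)

theorem RCLike.prod_prod_eq_one_of_eq_conj {ι 𝕜 : Type*} [Fintype ι] [RCLike 𝕜]
    (q : ι → ι → 𝕜) (hmod : ∀ i j, ‖q i j‖ = 1) (hdiag : ∀ i, q i i = 1)
    (hconj : ∀ i j, q i j = starRingEnd 𝕜 (q j i)) : ∏ i, ∏ j, q i j = 1 :=
  Fintype.prod_prod_eq_one_of_mul_swap q hdiag fun i j => by
    rw [hconj i j, RCLike.conj_mul, hmod]
    simp

theorem ContinuousLinearMap.norm_list_prod_apply {𝕜 E : Type*} [NormedField 𝕜]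
    [SeminormedAddCommGroup E] [NormedSpace 𝕜 E] {l : List (E →L[𝕜] E)}
    (hl : ∀ A ∈ l, ∀ x, ‖A x‖ = ‖x‖) (x : E) : ‖l.prod x‖ = ‖x‖ := by
  induction l with
  | nil => simp
  | cons A l ih =>
    rw [List.prod_cons, mul_apply_eq_comp, hl A List.mem_cons_self,
      ih fun B hB => hl B (List.mem_cons_of_mem A hB)]

section SMulCommute

variable {R A ι : Type*} [CommSemiring R] [Semiring A] [Algebra R A]
  {X : ι → A} {q : ι → ι → R}

theorem mul_list_prod_map_eq_smul (hcomm : ∀ i j, X i * X j = q i j • (X j * X i))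
    (i : ι) (l : List ι) :
    X i * (l.map X).prod = (l.map (q i)).prod • ((l.map X).prod * X i) := by
  induction l with
  | nil => simp
  | cons a t ih =>
    simp only [List.map_cons, List.prod_cons]
    rw [← mul_assoc, hcomm, smul_mul_assoc, mul_assoc, ih, mul_smul_comm, smul_smul, mul_assoc]

theorem mul_prod_ofFn_eq_smul {d : ℕ} {X : Fin d → A} {q : Fin d → Fin d → R}
    (hcomm : ∀ i j, X i * X j = q i j • (X j * X i)) (i : Fin d) :
    X i * (List.ofFn X).prod = (∏ j, q i j) • ((List.ofFn X).prod * X i) := by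
  rw [List.ofFn_eq_map, mul_list_prod_map_eq_smul hcomm, ← List.ofFn_eq_map, List.prod_ofFn]

theorem exists_list_prod_map_eq_smul_mul (hcomm : ∀ i j, X i * X j = q i j • (X j * X i))
    {i : ι} {l : List ι} (hi : i ∈ l) : ∃ (c : R) (W : A), (l.map X).prod = c • (X i * W) := by
  induction l with
  | nil => simp at hi
  | cons a t ih =>
    rcases List.mem_cons.1 hi with rfl | hit
    · exact ⟨1, (t.map X).prod, by simp⟩
    · obtain ⟨c, W, hcW⟩ := ih hit
      refine ⟨c * q a i, X a * W, ?_⟩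
      rw [List.map_cons, List.prod_cons, hcW, mul_smul_comm, ← mul_assoc, hcomm, smul_mul_assoc,
        smul_smul, mul_assoc]

end SMulCommute

section IsometryLimit

variable {𝕜 H : Type*} [RCLike 𝕜] [NormedAddCommGroup H] [InnerProductSpace 𝕜 H]
  (U : H →ₗᵢ[𝕜] H)

theorem LinearIsometry.pow_apply_comm (m : ℕ) (x : H) : (U ^ m) (U x) = U ((U ^ m) x) := by
  rw [LinearIsometry.coe_pow, ← Function.iterate_succ_apply, Function.iterate_succ_apply']

def LinearIsometry.limitTransition (n m : ℕ) (_ : n ≤ m) : H →ₗ[𝕜] H :=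
  (U ^ (m - n)).toLinearMap

def LinearIsometry.IsometryLimit : Type _ :=
  Module.DirectLimit (fun _ : ℕ => H) U.limitTransition

namespace LinearIsometry.IsometryLimit

instance : AddCommGroup U.IsometryLimit :=
  inferInstanceAs (AddCommGroup (Module.DirectLimit (fun _ : ℕ => H) U.limitTransition))

instance : Module 𝕜 U.IsometryLimit :=
  inferInstanceAs (Module 𝕜 (Module.DirectLimit (fun _ : ℕ => H) U.limitTransition))

def of (n : ℕ) : H →ₗ[𝕜] U.IsometryLimit :=
  Module.DirectLimit.of 𝕜 ℕ (fun _ : ℕ => H) U.limitTransition n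

theorem of_pow_apply (n k : ℕ) (x : H) : of U (n + k) ((U ^ k) x) = of U n x := by
  have h := Module.DirectLimit.of_f (R := 𝕜) (G := fun _ : ℕ => H) (f := U.limitTransition)
    (hij := Nat.le_add_right n k) (x := x)
  rwa [limitTransition, Nat.add_sub_cancel_left] at h

theorem of_succ_apply (n : ℕ) (x : H) : of U (n + 1) (U x) = of U n x := by
  simpa using of_pow_apply U n 1 x

theorem exists_of (v : U.IsometryLimit) : ∃ n x, of U n x = v :=
  Module.DirectLimit.exists_of v

variable {U} in
theorem induction_on {C : U.IsometryLimit → Prop} (v : U.IsometryLimit)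
    (ih : ∀ n x, C (of U n x)) : C v := by
  obtain ⟨n, x, rfl⟩ := exists_of U v
  exact ih n x

section Lift

variable {P : Type*} [AddCommGroup P] [Module 𝕜 P]

def lift (g : ℕ → H →ₗ[𝕜] P) (hg : ∀ n x, g (n + 1) (U x) = g n x) :
    U.IsometryLimit →ₗ[𝕜] P :=
  Module.DirectLimit.lift 𝕜 ℕ (fun _ : ℕ => H) U.limitTransition g fun n m hnm x => by
    obtain ⟨k, rfl⟩ := Nat.exists_eq_add_of_le hnm
    simp only [limitTransition, Nat.add_sub_cancel_left, LinearIsometry.coe_toLinearMap]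
    clear hnm
    induction k generalizing x with
    | zero => simp
    | succ k ih => rw [pow_succ', LinearIsometry.coe_mul, Function.comp_apply, ← add_assoc, hg, ih]

@[simp]
theorem lift_of (g : ℕ → H →ₗ[𝕜] P) (hg : ∀ n x, g (n + 1) (U x) = g n x) (n : ℕ) (x : H) :
    lift U g hg (of U n x) = g n x :=
  Module.DirectLimit.lift_of _ _ _

end Lift

def innerOfLeft (m : ℕ) (k : H) : U.IsometryLimit →ₗ[𝕜] 𝕜 :=
  lift U (fun n => (innerₛₗ 𝕜 ((U ^ n) k)).comp (U ^ m).toLinearMap) fun n x => by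
    simp only [LinearMap.comp_apply, innerₛₗ_apply_apply, LinearIsometry.coe_toLinearMap]
    rw [pow_succ', LinearIsometry.coe_mul, Function.comp_apply, U.pow_apply_comm,
      U.inner_map_map]

theorem innerOfLeft_of (m : ℕ) (k : H) (n : ℕ) (x : H) :
    innerOfLeft U m k (of U n x) = inner 𝕜 ((U ^ n) k) ((U ^ m) x) := by
  simp [innerOfLeft]

/- `innerRight w v = ⟪v, w⟫` is conjugate-linear in `v`; since `lift` only produces linear maps,
it is assembled from the conjugates of the functionals `innerOfLeft m k = ⟪of m k, ·⟫`. -/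
def innerRight : U.IsometryLimit →ₗ[𝕜] U.IsometryLimit →ₗ⋆[𝕜] 𝕜 :=
  lift U (fun m =>
    { toFun k := (starRingEnd 𝕜).toSemilinearMap.comp (innerOfLeft U m k)
      map_add' k k' := by
        ext v
        induction v using induction_on
        simp [innerOfLeft_of, inner_add_left]
      map_smul' c k := by
        ext v
        induction v using induction_on
        simp [innerOfLeft_of, inner_smul_left] })
    fun m k => by
      ext v
      induction v using induction_on
      simp [innerOfLeft_of, pow_succ', U.pow_apply_comm]

theorem innerRight_of_of (m : ℕ) (k : H) (n : ℕ) (x : H) :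
    innerRight U (of U m k) (of U n x) = inner 𝕜 ((U ^ m) x) ((U ^ n) k) := by
  simp [innerRight, innerOfLeft_of]

@[reducible] def innerCore : InnerProductSpace.Core 𝕜 U.IsometryLimit where
  inner v w := innerRight U w v
  conj_inner_symm v w := by
    induction v using induction_on
    induction w using induction_on
    simp [innerRight_of_of]
  re_inner_nonneg v := by
    induction v using induction_on
    simp [innerRight_of_of]
  add_left v w z := map_add _ _ _
  smul_left v w c := LinearMap.map_smulₛₗ _ _ _
  definite v hv := by
    induction v using induction_on
    simp_all [innerRight_of_of]

instance : NormedAddCommGroup U.IsometryLimit :=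
  @InnerProductSpace.Core.toNormedAddCommGroup 𝕜 _ _ _ _ (innerCore U)

instance : InnerProductSpace 𝕜 U.IsometryLimit := InnerProductSpace.ofCore (innerCore U).toCore

theorem inner_of_of (m n : ℕ) (x y : H) :
    inner 𝕜 (of U m x) (of U n y) = inner 𝕜 ((U ^ n) x) ((U ^ m) y) :=
  innerRight_of_of U n y m x

theorem norm_of (n : ℕ) (x : H) : ‖of U n x‖ = ‖x‖ := by
  rw [@norm_eq_sqrt_re_inner 𝕜, inner_of_of, (U ^ n).inner_map_map,
    ← @norm_eq_sqrt_re_inner 𝕜]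

section Twist

variable {U} (A : H →L[𝕜] H) {c : 𝕜} (hc : ‖c‖ = 1) (hA : ∀ x, A (U x) = c • U (A x))

def twist : U.IsometryLimit →ₗ[𝕜] U.IsometryLimit :=
  lift U (fun n => (starRingEnd 𝕜 c) ^ n • of U n ∘ₗ A.toLinearMap) fun n x => by
    simp only [LinearMap.smul_apply, LinearMap.comp_apply, coe_coe, hA, map_smul,
      of_succ_apply, smul_smul]
    rw [pow_succ, mul_assoc, RCLike.conj_mul, hc]
    simp

theorem twist_of (n : ℕ) (x : H) :
    twist A hc hA (of U n x) = (starRingEnd 𝕜 c) ^ n • of U n (A x) := by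
  simp [twist]

theorem norm_twist (hAiso : ∀ x, ‖A x‖ = ‖x‖) (v : U.IsometryLimit) :
    ‖twist A hc hA v‖ = ‖v‖ := by
  induction v using induction_on
  rw [twist_of, norm_smul, norm_pow, RCLike.norm_conj, hc, one_pow, one_mul, norm_of, norm_of,
    hAiso]

theorem twist_surjective {b : 𝕜} {W : H →L[𝕜] H} (hW : ∀ x, U x = b • A (W x)) :
    Function.Surjective (twist A hc hA) := by
  intro v
  induction v using induction_on with | ih n x => ?_
  refine ⟨(b * c ^ (n + 1)) • of U (n + 1) (W x), ?_⟩
  have hcc : c * starRingEnd 𝕜 c = 1 := by simp [RCLike.mul_conj, hc]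
  rw [map_smul, twist_of, smul_smul, mul_assoc, ← mul_pow, hcc, one_pow, mul_one, ← map_smul,
    ← hW, of_succ_apply]

end Twist

end LinearIsometry.IsometryLimit

end IsometryLimit

section Completion

open UniformSpace

theorem LinearMap.exists_mem_unitary_completion_extension {𝕜 V : Type*} [RCLike 𝕜]
    [NormedAddCommGroup V] [InnerProductSpace 𝕜 V] (T : V →ₗ[𝕜] V)
    (hnorm : ∀ v, ‖T v‖ = ‖v‖) (hsurj : Function.Surjective T) :
    ∃ Y ∈ unitary (Completion V →L[𝕜] Completion V), ∀ v : V, Y v = T v := by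
  let e := LinearIsometryEquiv.ofSurjective ⟨T, hnorm⟩ hsurj
  have hcompl : ∀ F G : V →L[𝕜] V, (∀ v, F (G v) = v) → F.completion * G.completion = 1 := by
    intro F G hFG
    refine DFunLike.coe_injective (Completion.ext (map_continuous _) (map_continuous _) ?_)
    intro v
    simp [hFG]
  have hunit : IsUnit (e : V →L[𝕜] V).completion :=
    ⟨⟨_, (e.symm : V →L[𝕜] V).completion, hcompl _ _ e.apply_symm_apply,
      hcompl _ _ e.symm_apply_apply⟩, rfl⟩
  refine ⟨_, hunit.mem_unitary_of_star_mul_self ?_, fun v => by simp [e]⟩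
  rw [ContinuousLinearMap.star_eq_adjoint]
  refine (ContinuousLinearMap.norm_map_iff_adjoint_comp_self _).1 fun x => ?_
  induction x using Completion.induction_on with
  | hp => exact isClosed_eq (by fun_prop) (by fun_prop)
  | ih v => simp [e, hnorm]

namespace LinearIsometry.IsometryLimit

variable {𝕜 H : Type*} [RCLike 𝕜] [NormedAddCommGroup H] [InnerProductSpace 𝕜 H]
  (U : H →ₗᵢ[𝕜] H)

def toCompl (n : ℕ) : H →ₗᵢ[𝕜] Completion U.IsometryLimit :=
  Completion.toComplₗᵢ.comp ⟨of U n, norm_of U n⟩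

theorem toCompl_apply (n : ℕ) (x : H) :
    toCompl U n x = (of U n x : Completion U.IsometryLimit) :=
  rfl

theorem toCompl_succ_apply (n : ℕ) (x : H) : toCompl U (n + 1) (U x) = toCompl U n x := by
  simp [toCompl_apply, of_succ_apply]

theorem dense_iUnion_range_toCompl : Dense (⋃ n, Set.range (toCompl U n)) := by
  refine Completion.denseRange_coe.mono ?_
  rintro _ ⟨v, rfl⟩
  induction v using induction_on with | ih n x => exact Set.mem_iUnion.2 ⟨n, x, rfl⟩

variable {U}

theorem ext_toCompl {F G : Completion U.IsometryLimit →L[𝕜] Completion U.IsometryLimit}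
    (h : ∀ n x, F (toCompl U n x) = G (toCompl U n x)) : F = G :=
  DFunLike.coe_injective <| Completion.ext (map_continuous _) (map_continuous _) fun v => by
    induction v using induction_on with | ih n x => exact h n x

theorem exists_mem_unitary_toCompl_twist (A : H →L[𝕜] H) {c : 𝕜} (hc : ‖c‖ = 1)
    (hA : ∀ x, A (U x) = c • U (A x)) (hAiso : ∀ x, ‖A x‖ = ‖x‖)
    (hW : ∃ (b : 𝕜) (W : H →L[𝕜] H), ∀ x, U x = b • A (W x)) :
    ∃ Y ∈ unitary (Completion U.IsometryLimit →L[𝕜] Completion U.IsometryLimit),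
      ∀ n x, Y (toCompl U n x) = starRingEnd 𝕜 c ^ n • toCompl U n (A x) := by
  obtain ⟨b, W, hW⟩ := hW
  obtain ⟨Y, hY, hYT⟩ := (twist A hc hA).exists_mem_unitary_completion_extension
    (norm_twist A hc hA hAiso) (twist_surjective A hc hA hW)
  exact ⟨Y, hY, fun n x => by simp [toCompl_apply, hYT, twist_of]⟩

theorem list_prod_apply_toCompl {ι : Type*}
    {Y : ι → Completion U.IsometryLimit →L[𝕜] Completion U.IsometryLimit}
    {A : ι → H →L[𝕜] H} {c : ι → 𝕜}
    (hY : ∀ i n x, Y i (toCompl U n x) = starRingEnd 𝕜 (c i) ^ n • toCompl U n (A i x))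
    (l : List ι) (n : ℕ) (x : H) :
    (l.map Y).prod (toCompl U n x) =
      starRingEnd 𝕜 (l.map c).prod ^ n • toCompl U n ((l.map A).prod x) := by
  induction l with
  | nil => simp
  | cons a t ih =>
    simp only [List.map_cons, List.prod_cons, mul_apply_eq_comp, ih, map_smul, hY, smul_smul,
      map_mul, mul_pow, mul_comm]

theorem topologicalClosure_span_adjoint_pow_eq_top
    {Y : Completion U.IsometryLimit →L[𝕜] Completion U.IsometryLimit}
    (hY : Y ∈ unitary _) (hshift : ∀ n x, Y (toCompl U (n + 1) x) = toCompl U n x) :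
    (Submodule.span 𝕜 (⋃ n : ℕ, ⇑(adjoint Y ^ n) '' Set.range (toCompl U 0))).topologicalClosure
      = ⊤ := by
  have hadj : ∀ n x, adjoint Y (toCompl U n x) = toCompl U (n + 1) x := fun n x => by
    rw [← hshift, ← star_eq_adjoint, ← mul_apply_eq_comp, Unitary.star_mul_self_of_mem hY,
      one_apply_eq_self]
  have hpow : ∀ n x, (adjoint Y ^ n) (toCompl U 0 x) = toCompl U n x := fun n x => by
    induction n with
    | zero => rfl
    | succ n ih => rw [pow_succ', mul_apply_eq_comp, ih, hadj]
  rw [← Submodule.dense_iff_topologicalClosure_eq_top]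
  refine (dense_iUnion_range_toCompl U).mono ?_
  simp only [Set.iUnion_subset_iff, Set.range_subset_iff]
  intro n x
  exact Submodule.subset_span (Set.mem_iUnion.2 ⟨n, toCompl U 0 x, ⟨x, rfl⟩, hpow n x⟩)

end LinearIsometry.IsometryLimit

end Completion

end

open LinearIsometry.IsometryLimit in
theorem stmt_19 {H : Type u} [NormedAddCommGroup H] [InnerProductSpace ℂ H] [CompleteSpace H]
    (d : ℕ) (q : Fin d → Fin d → ℂ)
    (hq_mod : ∀ i j, ‖q i j‖ = 1) (hq_diag : ∀ i, q i i = 1)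
    (hq_conj : ∀ i j, q i j = starRingEnd ℂ (q j i))
    (X : Fin d → H →L[ℂ] H)
    (hiso : ∀ i, adjoint (X i) ∘L X i = 1)
    (hcomm : ∀ i j, X i ∘L X j = q i j • (X j ∘L X i)) :
    ∃ (K : Type u) (_ : NormedAddCommGroup K) (_ : InnerProductSpace ℂ K)
      (_ : CompleteSpace K) (ι : H →ₗᵢ[ℂ] K) (Y : Fin d → K →L[ℂ] K),
      -- each Y i is a unitary :
      (∀ i, adjoint (Y i) ∘L Y i = 1 ∧ Y i ∘L adjoint (Y i) = 1) ∧
      -- (Y₁, …, Y_d) is q-commutative :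
      (∀ i j, Y i ∘L Y j = q i j • (Y j ∘L Y i)) ∧
      -- each Y i extends X i :
      (∀ i, ∀ h : H, Y i (ι h) = ι (X i h)) ∧
      -- Y = Y₁ ⋯ Y_d extends X = X₁ ⋯ X_d :
      (∀ h : H, (List.ofFn Y).prod (ι h) = ι ((List.ofFn X).prod h)) ∧
      -- and Y is the minimal unitary extension of X :
      (Submodule.span ℂ
          (⋃ n : ℕ, ⇑((adjoint ((List.ofFn Y).prod)) ^ n) '' Set.range ι)).topologicalClosure
        = ⊤ := by
  have hXnorm : ∀ i x, ‖X i x‖ = ‖x‖ := fun i => (norm_map_iff_adjoint_comp_self (X i)).2 (hiso i)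
  let U : H →ₗᵢ[ℂ] H := ⟨(List.ofFn X).prod,
    norm_list_prod_apply (by simpa [List.forall_mem_ofFn_iff] using hXnorm)⟩
  set lam : Fin d → ℂ := fun i => ∏ j, q i j
  have hlam : ∀ i, ‖lam i‖ = 1 := fun i => by simp [lam, norm_prod, hq_mod]
  have hlam_prod : ∏ i, lam i = 1 := RCLike.prod_prod_eq_one_of_eq_conj q hq_mod hq_diag hq_conj
  have hXU : ∀ i x, X i (U x) = lam i • U (X i x) := fun i x =>
    congr($(mul_prod_ofFn_eq_smul hcomm i) x)
  have hUX : ∀ i, ∃ (b : ℂ) (W : H →L[ℂ] H), ∀ x, U x = b • X i (W x) := fun i => by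
    obtain ⟨b, W, h⟩ := exists_list_prod_map_eq_smul_mul hcomm (List.mem_finRange i)
    exact ⟨b, W, fun x => by simpa [U, List.ofFn_eq_map] using congr($h x)⟩
  choose Y hYu hY using fun i =>
    exists_mem_unitary_toCompl_twist (X i) (hlam i) (hXU i) (hXnorm i) (hUX i)
  have hYprod : ∀ n x, (List.ofFn Y).prod (toCompl U n x) = toCompl U n ((List.ofFn X).prod x) :=
    fun n x => by
      simpa only [← List.ofFn_eq_map, List.prod_ofFn, hlam_prod, map_one, one_pow, one_smul] using
        list_prod_apply_toCompl hY (List.finRange d) n x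
  refine ⟨_, inferInstance, inferInstance, inferInstance, toCompl U 0, Y, fun i => ?_,
    fun i j => ext_toCompl fun n x => ?_, fun i x => by simpa using hY i 0 x, hYprod 0,
    topologicalClosure_span_adjoint_pow_eq_top (Submonoid.list_prod_mem _ ?_)
      fun n x => (hYprod (n + 1) x).trans (toCompl_succ_apply U n x)⟩
  · simpa only [Unitary.mem_iff, star_eq_adjoint, mul_def] using hYu i
  · have hXX : X i (X j x) = q i j • X j (X i x) := congr($(hcomm i j) x)
    simp only [comp_apply, smul_apply, hY, map_smul, smul_smul, hXX]
    congr 1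
    ring
  · simpa [List.forall_mem_ofFn_iff] using hYu
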